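/- arXiv:2105.11265 — 2 statements merged into one kernel-verified Lean document; each statement's English description precedes it below -/
import Mathlib

section
/- Let X and Y be sets, p : X → Y a surjection all of whose fibers have cardinality at most 2, and let σ : X → X and τ : Y → Y be bijections with p ∘ σ = τ ∘ p. If every orbit of τ on Y is finite of cardinality a power of 2, then every orbit of σ on X is finite of cardinality a power of 2. -/
section Helpers

variable {X : Type*}

private lemma fix_pow (g : Equiv.Perm X) (x : X) (h : g x = x) (q : ℕ) :
    (g ^ q) x = x := by
  induction q with
  | zero => simp
  | succ n ih =>
    rw [pow_succ, Equiv.Perm.mul_apply, h, ih]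

private lemma fix_zpow (g : Equiv.Perm X) (x : X) (h : g x = x) (q : ℤ) :
    (g ^ q) x = x := by
  induction q using Int.induction_on with
  | zero => simp
  | succ n ih =>
    rw [zpow_add_one, Equiv.Perm.mul_apply, h, ih]
  | pred n ih =>
    have hinv : g⁻¹ x = x := by
      conv_lhs => rw [← h]
      simp
    rw [zpow_sub_one, Equiv.Perm.mul_apply, hinv, ih]

/-- From equal iterates, extract a period. -/
private lemma step_period (f : Equiv.Perm X) (x : X) (i j : ℕ) (hij : i < j)
    (hEq : (f ^ i) x = (f ^ j) x) : (f ^ (j - i)) x = x := by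
  have h : (f ^ i) ((f ^ (j - i)) x) = (f ^ i) x := by
    rw [← Equiv.Perm.mul_apply, ← pow_add]
    have : i + (j - i) = j := by omega
    rw [this]
    exact hEq.symm
  exact (f ^ i).injective h

/-- If `x` has exact period `m` under `f`, its ℤ-orbit is finite of cardinality `m`. -/
private lemma orbit_card (f : Equiv.Perm X) (x : X) (m : ℕ) (hm : 0 < m)
    (hfix : (f ^ m) x = x) (hmin : ∀ i, 0 < i → i < m → (f ^ i) x ≠ x) :
    {z | ∃ n : ℤ, (f ^ n) x = z}.Finite ∧ {z | ∃ n : ℤ, (f ^ n) x = z}.ncard = m := by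
  classical
  have key : ∀ n : ℤ, ∃ i : ℕ, i < m ∧ ((f ^ i) x : X) = (f ^ n) x := by
    intro n
    refine ⟨(n % (m : ℤ)).toNat, ?_, ?_⟩
    · have h1 : n % (m : ℤ) < m := Int.emod_lt_of_pos n (by exact_mod_cast hm)
      omega
    · have h0 : (0 : ℤ) ≤ n % (m : ℤ) := Int.emod_nonneg n (by positivity)
      have hcast : ((n % (m : ℤ)).toNat : ℤ) = n % (m : ℤ) := Int.toNat_of_nonneg h0
      have hstep : (f ^ n) x = (f ^ (n % (m : ℤ))) ((f ^ ((m : ℤ) * (n / (m : ℤ)))) x) := by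
        rw [← Equiv.Perm.mul_apply, ← zpow_add, Int.emod_add_mul_ediv]
      have hfm : (f ^ ((m : ℤ) * (n / (m : ℤ)))) x = x := by
        rw [zpow_mul]
        exact fix_zpow (f ^ (m : ℤ)) x (by rw [zpow_natCast]; exact hfix) _
      rw [hstep, hfm, ← zpow_natCast f (n % (m : ℤ)).toNat, hcast]
  have hset : {z | ∃ n : ℤ, (f ^ n) x = z} =
      ↑(Finset.image (fun i : ℕ => (f ^ i) x) (Finset.range m)) := by
    ext z
    simp only [Set.mem_setOf_eq, Finset.coe_image, Set.mem_image, Finset.mem_coe,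
      Finset.mem_range]
    constructor
    · rintro ⟨n, rfl⟩
      obtain ⟨i, hi, hEq⟩ := key n
      exact ⟨i, hi, hEq⟩
    · rintro ⟨i, hi, rfl⟩
      exact ⟨(i : ℤ), by rw [zpow_natCast]⟩
  have hinj : Set.InjOn (fun i : ℕ => (f ^ i) x) ↑(Finset.range m) := by
    intro i hi j hj hEq
    simp only [Finset.coe_range, Set.mem_Iio] at hi hj
    by_contra hne
    rcases Nat.lt_or_ge i j with h | h
    · exact hmin (j - i) (by omega) (by omega) (step_period f x i j h hEq)
    · have h' : j < i := by omega
      exact hmin (i - j) (by omega) (by omega) (step_period f x j i h' hEq.symm)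
  constructor
  · rw [hset]; exact (Finset.image _ _).finite_toSet
  · rw [hset, Set.ncard_coe_finset, Finset.card_image_of_injOn hinj, Finset.card_range]

/-- If the ℤ-orbit is finite, the point is periodic. -/
private lemma exists_period (f : Equiv.Perm X) (x : X)
    (hfin : {z | ∃ n : ℤ, (f ^ n) x = z}.Finite) :
    ∃ m : ℕ, 0 < m ∧ (f ^ m) x = x := by
  have hni : ¬ Function.Injective (fun i : ℕ => (f ^ i) x) := by
    intro hinj
    exact (Set.infinite_of_injective_forall_mem hinj
      (fun i => show ∃ n : ℤ, (f ^ n) x = (f ^ i) x from ⟨(i : ℤ), by rw [zpow_natCast]⟩)) hfin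
  rw [Function.not_injective_iff] at hni
  obtain ⟨i, j, hEq, hne⟩ := hni
  rcases Nat.lt_or_ge i j with h | h
  · exact ⟨j - i, by omega, step_period f x i j h hEq⟩
  · have h' : j < i := by omega
    exact ⟨i - j, by omega, step_period f x j i h' hEq.symm⟩

/-- The minimal period divides any period. -/
private lemma minPeriod_dvd (f : Equiv.Perm X) (x : X) (m M : ℕ) (hm : 0 < m)
    (hfix : (f ^ m) x = x)
    (hmin : ∀ i, 0 < i → i < m → (f ^ i) x ≠ x)
    (hM : (f ^ M) x = x) : m ∣ M := by
  have hstep : (f ^ M) x = (f ^ (M % m)) ((f ^ (m * (M / m))) x) := by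
    rw [← Equiv.Perm.mul_apply, ← pow_add, Nat.mod_add_div]
  have hfm : (f ^ (m * (M / m))) x = x := by
    rw [pow_mul]
    exact fix_pow (f ^ m) x hfix _
  have hr : (f ^ (M % m)) x = x := by
    rw [hstep, hfm] at hM
    exact hM
  rcases Nat.eq_zero_or_pos (M % m) with h0 | h0
  · exact Nat.dvd_of_mod_eq_zero h0
  · exact absurd hr (hmin _ h0 (Nat.mod_lt _ hm))

end Helpers

/-- If `p : X → Y` is a surjection with fibers of cardinality at most 2, semiconjugating a
bijection `σ` of `X` to a bijection `τ` of `Y`, and every `τ`-orbit is finite of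
cardinality a power of 2, then every `σ`-orbit is finite of cardinality a power of 2. -/
theorem orbits_power_of_two {X Y : Type*} (p : X → Y) (hp : Function.Surjective p)
    (hfib : ∀ y : Y, ∃ x₁ x₂ : X, p ⁻¹' {y} ⊆ {x₁, x₂})
    (σ : Equiv.Perm X) (τ : Equiv.Perm Y)
    (hcomm : ∀ x, p (σ x) = τ (p x))
    (hτ : ∀ y : Y, ∃ k : ℕ, {z | ∃ n : ℤ, (τ ^ n) y = z}.Finite ∧
      {z | ∃ n : ℤ, (τ ^ n) y = z}.ncard = 2 ^ k) :
    ∀ x : X, ∃ k : ℕ, {z | ∃ n : ℤ, (σ ^ n) x = z}.Finite ∧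
      {z | ∃ n : ℤ, (σ ^ n) x = z}.ncard = 2 ^ k := by
  classical
  -- commutation for natural powers
  have hc : ∀ (n : ℕ) (z : X), p ((σ ^ n) z) = (τ ^ n) (p z) := by
    intro n
    induction n with
    | zero => simp
    | succ n ih =>
      intro z
      rw [pow_succ, pow_succ, Equiv.Perm.mul_apply, Equiv.Perm.mul_apply, ih, hcomm]
  intro x
  obtain ⟨k, hfinτ, hcardτ⟩ := hτ (p x)
  -- minimal period of p x under τ
  obtain ⟨m₀, hm₀pos, hm₀fix⟩ := exists_period τ (p x) hfinτ
  have hex : ∃ m : ℕ, 0 < m ∧ (τ ^ m) (p x) = p x := ⟨m₀, hm₀pos, hm₀fix⟩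
  obtain ⟨hmpos, hmfix⟩ := Nat.find_spec hex
  have hmmin : ∀ i, 0 < i → i < Nat.find hex → (τ ^ i) (p x) ≠ p x := by
    intro i hi him hfx
    exact Nat.find_min hex him ⟨hi, hfx⟩
  have hτcard := orbit_card τ (p x) (Nat.find hex) hmpos hmfix hmmin
  have hm2k : Nat.find hex = 2 ^ k := by rw [← hτcard.2, hcardτ]
  -- so τ^(2^k) fixes p x
  have hN : (τ ^ (2 ^ k)) (p x) = p x := by rw [← hm2k]; exact hmfix
  -- fiber argument: σ^(2 * 2^k) fixes x
  obtain ⟨x₁, x₂, hsub⟩ := hfib (p x)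
  have hgF : ∀ z : X, p z = p x → p ((σ ^ (2 ^ k)) z) = p x := by
    intro z hz
    rw [hc (2 ^ k) z, hz, hN]
  have hgx : p ((σ ^ (2 ^ k)) x) = p x := hgF x rfl
  have hggx : p ((σ ^ (2 ^ k)) ((σ ^ (2 ^ k)) x)) = p x := hgF _ hgx
  have hMx : (σ ^ (2 * 2 ^ k)) x = x := by
    have h2 : (σ ^ (2 * 2 ^ k)) x = (σ ^ (2 ^ k)) ((σ ^ (2 ^ k)) x) := by
      rw [two_mul, pow_add, Equiv.Perm.mul_apply]
    rw [h2]
    by_cases h1 : (σ ^ (2 ^ k)) x = x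
    · rw [h1, h1]
    · have hgne : (σ ^ (2 ^ k)) ((σ ^ (2 ^ k)) x) ≠ (σ ^ (2 ^ k)) x :=
        fun h => h1 ((σ ^ (2 ^ k)).injective h)
      have ha : x ∈ ({x₁, x₂} : Set X) := hsub rfl
      have hb : (σ ^ (2 ^ k)) x ∈ ({x₁, x₂} : Set X) := hsub hgx
      have hcc : (σ ^ (2 ^ k)) ((σ ^ (2 ^ k)) x) ∈ ({x₁, x₂} : Set X) := hsub hggx
      simp only [Set.mem_insert_iff, Set.mem_singleton_iff] at ha hb hcc
      rcases hb with hb | hb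
      · have ha' : x = x₂ := by
          rcases ha with ha | ha
          · exact absurd (hb.trans ha.symm) h1
          · exact ha
        have hc' : (σ ^ (2 ^ k)) ((σ ^ (2 ^ k)) x) = x₂ := by
          rcases hcc with hcc | hcc
          · exact absurd (hcc.trans hb.symm) hgne
          · exact hcc
        rw [hc', ← ha']
      · have ha' : x = x₁ := by
          rcases ha with ha | ha
          · exact ha
          · exact absurd (hb.trans ha.symm) h1
        have hc' : (σ ^ (2 ^ k)) ((σ ^ (2 ^ k)) x) = x₁ := by
          rcases hcc with hcc | hcc
          · exact hcc
          · exact absurd (hcc.trans hb.symm) hgne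
        rw [hc', ← ha']
  -- minimal period of x under σ
  have hexσ : ∃ m : ℕ, 0 < m ∧ (σ ^ m) x = x := ⟨2 * 2 ^ k, by positivity, hMx⟩
  obtain ⟨hm'pos, hm'fix⟩ := Nat.find_spec hexσ
  have hm'min : ∀ i, 0 < i → i < Nat.find hexσ → (σ ^ i) x ≠ x := by
    intro i hi him hfx
    exact Nat.find_min hexσ him ⟨hi, hfx⟩
  have hdvd : Nat.find hexσ ∣ 2 * 2 ^ k :=
    minPeriod_dvd σ x (Nat.find hexσ) (2 * 2 ^ k) hm'pos hm'fix hm'min hMx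
  have hdvd2 : Nat.find hexσ ∣ 2 ^ (k + 1) := by
    have h : 2 * 2 ^ k = 2 ^ (k + 1) := by rw [pow_succ, mul_comm]
    rwa [h] at hdvd
  obtain ⟨j, _, hj⟩ := (Nat.dvd_prime_pow Nat.prime_two).mp hdvd2
  have hσcard := orbit_card σ x (Nat.find hexσ) hm'pos hm'fix hm'min
  exact ⟨j, hσcard.1, by rw [hσcard.2, hj]⟩
end

section
/- The group with Garside presentation ⟨a, b, c | ab = bc, bc = ca⟩ is isomorphic to the braid group B_3 = ⟨x, y | xyx = yxy⟩, and also to the trefoil knot group ⟨u, v | u^2 = v^3⟩. -/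
/-- The relations `ab = bc = ca` of the Garside presentation. -/
def garsideRels : Set (FreeGroup (Fin 3)) :=
  {FreeGroup.of 0 * FreeGroup.of 1 * (FreeGroup.of 1 * FreeGroup.of 2)⁻¹,
   FreeGroup.of 1 * FreeGroup.of 2 * (FreeGroup.of 2 * FreeGroup.of 0)⁻¹}

/-- The Artin relation `xyx = yxy` of the braid group `B₃`. -/
def braidRels : Set (FreeGroup (Fin 2)) :=
  {FreeGroup.of 0 * FreeGroup.of 1 * FreeGroup.of 0 *
    (FreeGroup.of 1 * FreeGroup.of 0 * FreeGroup.of 1)⁻¹}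

/-- The trefoil knot group relation `u² = v³`. -/
def trefoilRels : Set (FreeGroup (Fin 2)) :=
  {FreeGroup.of 0 ^ 2 * (FreeGroup.of 1 ^ 3)⁻¹}

lemma rel_one {α : Type*} {rels : Set (FreeGroup α)} {r : FreeGroup α} (h : r ∈ rels) :
    PresentedGroup.mk rels r = 1 :=
  (QuotientGroup.eq_one_iff _).2 (Subgroup.subset_normalClosure h)

/-- Relation `ab = bc` in the Garside group. -/
lemma ga : (PresentedGroup.of 0 * PresentedGroup.of 1 : PresentedGroup garsideRels)
    = PresentedGroup.of 1 * PresentedGroup.of 2 := by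
  have h := rel_one (rels := garsideRels) (Set.mem_insert _ _)
  simp only [map_mul, map_inv] at h
  exact mul_inv_eq_one.mp h

/-- Relation `bc = ca` in the Garside group. -/
lemma gb : (PresentedGroup.of 1 * PresentedGroup.of 2 : PresentedGroup garsideRels)
    = PresentedGroup.of 2 * PresentedGroup.of 0 := by
  have h := rel_one (rels := garsideRels) (Set.mem_insert_of_mem _ rfl)
  simp only [map_mul, map_inv] at h
  exact mul_inv_eq_one.mp h

/-- The braid relation in `B₃`. -/
lemma br : (PresentedGroup.of 0 * PresentedGroup.of 1 * PresentedGroup.of 0 :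
    PresentedGroup braidRels)
    = PresentedGroup.of 1 * PresentedGroup.of 0 * PresentedGroup.of 1 := by
  have h := rel_one (rels := braidRels) rfl
  simp only [map_mul, map_inv] at h
  exact mul_inv_eq_one.mp h

/-- The trefoil relation, pow-free form. -/
lemma tr' : (PresentedGroup.of 0 * PresentedGroup.of 0 : PresentedGroup trefoilRels)
    = PresentedGroup.of 1 * (PresentedGroup.of 1 * PresentedGroup.of 1) := by
  have h := rel_one (rels := trefoilRels) rfl
  simp only [map_mul, map_inv, map_pow] at h
  have h2 : (PresentedGroup.of 0 : PresentedGroup trefoilRels) ^ 2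
      = PresentedGroup.of 1 ^ 3 := mul_inv_eq_one.mp h
  rw [← sq, h2, pow_succ, pow_succ, pow_one]; group

/-- Garside → Braid, `a ↦ x`, `b ↦ y`, `c ↦ y⁻¹xy`. -/
def φ : PresentedGroup garsideRels →* PresentedGroup braidRels :=
  PresentedGroup.toGroup
    (f := ![PresentedGroup.of 0, PresentedGroup.of 1,
            (PresentedGroup.of 1)⁻¹ * PresentedGroup.of 0 * PresentedGroup.of 1]) <| by
    rintro r (rfl | rfl) <;>
      simp only [map_mul, map_inv, FreeGroup.lift_apply_of, Matrix.cons_val_zero, Matrix.cons_val_one,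
        Matrix.head_cons, Matrix.cons_val_two, Matrix.tail_cons] <;>
      rw [mul_inv_eq_one]
    · group
    · set x := (PresentedGroup.of 0 : PresentedGroup braidRels)
      set y := (PresentedGroup.of 1 : PresentedGroup braidRels)
      have h : y * (y⁻¹ * x * y) = x * y := by group
      have h2 : y⁻¹ * x * y * x = y⁻¹ * (x * y * x) := by group
      rw [h, h2, br]; simp only [x, y]; group

/-- Braid → Garside, `x ↦ a`, `y ↦ b`. -/
def ψ : PresentedGroup braidRels →* PresentedGroup garsideRels :=
  PresentedGroup.toGroup (f := ![PresentedGroup.of 0, PresentedGroup.of 1]) <| by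
    rintro r rfl
    simp only [map_mul, map_inv, FreeGroup.lift_apply_of, Matrix.cons_val_zero, Matrix.cons_val_one,
      Matrix.head_cons]
    rw [mul_inv_eq_one]
    set a := (PresentedGroup.of 0 : PresentedGroup garsideRels)
    set b := (PresentedGroup.of 1 : PresentedGroup garsideRels)
    set c := (PresentedGroup.of 2 : PresentedGroup garsideRels)
    calc a * b * a = b * c * a := by rw [ga]
      _ = b * (c * a) := by group
      _ = b * (b * c) := by rw [← gb]
      _ = b * (a * b) := by rw [← ga]
      _ = b * a * b := by group

/-- Braid → Trefoil, `x ↦ v⁻¹u`, `y ↦ u⁻¹v²`. -/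
def σ' : PresentedGroup braidRels →* PresentedGroup trefoilRels :=
  PresentedGroup.toGroup
    (f := ![(PresentedGroup.of 1)⁻¹ * PresentedGroup.of 0,
            (PresentedGroup.of 0)⁻¹ * (PresentedGroup.of 1 * PresentedGroup.of 1)]) <| by
    rintro r rfl
    simp only [map_mul, map_inv, FreeGroup.lift_apply_of, Matrix.cons_val_zero, Matrix.cons_val_one,
      Matrix.head_cons]
    rw [mul_inv_eq_one]
    set u := (PresentedGroup.of 0 : PresentedGroup trefoilRels)
    set v := (PresentedGroup.of 1 : PresentedGroup trefoilRels)
    have h1 : v⁻¹ * u * (u⁻¹ * (v * v)) * (v⁻¹ * u) = u := by group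
    have h2 : u⁻¹ * (v * v) * (v⁻¹ * u) * (u⁻¹ * (v * v)) = u⁻¹ * (v * (v * v)) := by group
    rw [h1, h2, ← tr']; simp only [u, v]; group

/-- Trefoil → Braid, `u ↦ xyx`, `v ↦ xy`. -/
def τ : PresentedGroup trefoilRels →* PresentedGroup braidRels :=
  PresentedGroup.toGroup
    (f := ![PresentedGroup.of 0 * PresentedGroup.of 1 * PresentedGroup.of 0,
            PresentedGroup.of 0 * PresentedGroup.of 1]) <| by
    rintro r rfl
    simp only [map_mul, map_inv, map_pow, FreeGroup.lift_apply_of, Matrix.cons_val_zero,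
      Matrix.cons_val_one, Matrix.head_cons]
    rw [mul_inv_eq_one, sq]
    nth_rewrite 2 [br]
    rw [pow_succ, pow_succ, pow_one]
    group

/-- The group `⟨a,b,c | ab = bc = ca⟩` is isomorphic to the braid group
`B₃ = ⟨x,y | xyx = yxy⟩` and to the trefoil knot group `⟨u,v | u² = v³⟩`. -/
theorem garside_braid_trefoil :
    Nonempty (PresentedGroup garsideRels ≃* PresentedGroup braidRels) ∧
    Nonempty (PresentedGroup garsideRels ≃* PresentedGroup trefoilRels) := by
  have e1 : PresentedGroup garsideRels ≃* PresentedGroup braidRels := by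
    refine MonoidHom.toMulEquiv φ ψ ?_ ?_
    · ext i
      fin_cases i <;>
        simp [φ, ψ, PresentedGroup.toGroup.of, map_mul, map_inv]
      · rw [mul_assoc, inv_mul_eq_iff_eq_mul]; exact ga
    · ext i
      fin_cases i <;> simp [φ, ψ, PresentedGroup.toGroup.of]
  have e2 : PresentedGroup braidRels ≃* PresentedGroup trefoilRels := by
    refine MonoidHom.toMulEquiv σ' τ ?_ ?_
    · ext i
      fin_cases i <;>
        simp [σ', τ, PresentedGroup.toGroup.of, map_mul, map_inv] <;>
        group
    · ext i
      fin_cases i <;>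
        simp [σ', τ, PresentedGroup.toGroup.of, map_mul, map_inv] <;>
        group
  exact ⟨⟨e1⟩, ⟨e1.trans e2⟩⟩
end
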